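/- arXiv:1310.4206 — 4 statements merged into one kernel-verified Lean document; each statement's English description precedes it below -/
import Mathlib

section
/- Let X be a real 2n×2n symplectic matrix (i.e. XᵀJX = J, where J = [[0, I],[−I, 0]] is the standard symplectic matrix) and let W = (1/2)(X + X⁻¹). Then all complex eigenvalues of X lie on the unit circle if and only if all eigenvalues of W are real and lie in the interval [−1, 1]. -/
/-!
For invertible `Y` and `z ≠ 0` one has the factorization
`(z + z⁻¹)/2 - (Y + Y⁻¹)/2 = -½ Y⁻¹ (z - Y) (z⁻¹ - Y)`, so over an algebraically closed field the
eigenvalues of `(Y + Y⁻¹)/2` are exactly the images of the eigenvalues of `Y` under the Joukowski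
map `z ↦ (z + z⁻¹)/2`. That map sends `z ≠ 0` into `[-1, 1]` iff `|z| = 1`, and a symplectic matrix
is invertible.
-/

open Matrix Polynomial

/-- The standard symplectic matrix `J = [[0, I], [-I, 0]]` in `n × n` blocks. -/
noncomputable def stdSymplecticJ (n : ℕ) : Matrix (Fin n ⊕ Fin n) (Fin n ⊕ Fin n) ℝ :=
  Matrix.fromBlocks 0 1 (-1) 0

theorem exists_ne_zero_half_add_inv_eq {K : Type*} [Field K] [IsAlgClosed K]
    (h2 : (2 : K) ≠ 0) (μ : K) : ∃ z : K, z ≠ 0 ∧ (z + z⁻¹) / 2 = μ := by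
  obtain ⟨s, hs⟩ := IsAlgClosed.exists_pow_nat_eq (μ ^ 2 - 1) two_pos
  have hprod : (μ + s) * (μ - s) = 1 := by linear_combination -hs
  refine ⟨μ + s, left_ne_zero_of_mul_eq_one hprod, ?_⟩
  rw [inv_eq_of_mul_eq_one_right hprod]
  field_simp
  ring

namespace Matrix

variable {m : Type*} [Fintype m] [DecidableEq m]

theorem map_nonsing_inv {R S : Type*} [CommRing R] [CommRing S] (f : R →+* S)
    {A : Matrix m m R} (hA : IsUnit A.det) : A⁻¹.map f = (A.map f)⁻¹ :=
  (inv_eq_right_inv <| by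
    rw [← Matrix.map_mul, mul_nonsing_inv A hA, Matrix.map_one _ f.map_zero f.map_one]).symm

variable {K : Type*} [Field K]

theorem ne_zero_of_isRoot_charpoly {Y : Matrix m m K} (hY : IsUnit Y.det) {z : K}
    (hz : Y.charpoly.IsRoot z) : z ≠ 0 := by
  rintro rfl
  rw [IsRoot, eval_charpoly, map_zero, zero_sub, det_neg] at hz
  exact mul_ne_zero (pow_ne_zero _ (neg_ne_zero.2 one_ne_zero)) hY.ne_zero hz

theorem scalar_half_add_inv_sub_half_add_inv (h2 : (2 : K) ≠ 0) {Y : Matrix m m K}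
    (hY : IsUnit Y.det) {z : K} (hz : z ≠ 0) :
    scalar m ((z + z⁻¹) / 2) - (2⁻¹ : K) • (Y + Y⁻¹) =
      (-2⁻¹ : K) • (Y⁻¹ * ((scalar m z - Y) * (scalar m z⁻¹ - Y))) := by
  simp only [scalar_apply, ← smul_one_eq_diagonal, sub_mul, mul_sub, smul_mul_assoc,
    mul_smul_comm, one_mul, mul_one, nonsing_inv_mul Y hY, ← mul_assoc]
  match_scalars <;> field_simp
  ring

theorem isRoot_charpoly_half_add_inv_iff (h2 : (2 : K) ≠ 0) {Y : Matrix m m K}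
    (hY : IsUnit Y.det) {z : K} (hz : z ≠ 0) :
    ((2⁻¹ : K) • (Y + Y⁻¹)).charpoly.IsRoot ((z + z⁻¹) / 2) ↔
      Y.charpoly.IsRoot z ∨ Y.charpoly.IsRoot z⁻¹ := by
  have hYinv : Y⁻¹.det ≠ 0 := (isUnit_nonsing_inv_det Y hY).ne_zero
  have hc : (-2⁻¹ : K) ^ Fintype.card m ≠ 0 := pow_ne_zero _ (by simpa using h2)
  simp only [IsRoot, eval_charpoly, scalar_half_add_inv_sub_half_add_inv h2 hY hz, det_smul,
    det_mul, mul_eq_zero, hc, hYinv, false_or]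

theorem isRoot_charpoly_half_add_inv_iff_exists [IsAlgClosed K] (h2 : (2 : K) ≠ 0)
    {Y : Matrix m m K} (hY : IsUnit Y.det) {μ : K} :
    ((2⁻¹ : K) • (Y + Y⁻¹)).charpoly.IsRoot μ ↔ ∃ z, Y.charpoly.IsRoot z ∧ (z + z⁻¹) / 2 = μ := by
  constructor
  · intro hμ
    obtain ⟨z, hz, rfl⟩ := exists_ne_zero_half_add_inv_eq h2 μ
    rcases (isRoot_charpoly_half_add_inv_iff h2 hY hz).1 hμ with hroot | hroot
    · exact ⟨z, hroot, rfl⟩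
    · exact ⟨z⁻¹, hroot, by rw [inv_inv, add_comm]⟩
  · rintro ⟨z, hroot, rfl⟩
    exact (isRoot_charpoly_half_add_inv_iff h2 hY (ne_zero_of_isRoot_charpoly hY hroot)).2
      (Or.inl hroot)

end Matrix

theorem Complex.norm_eq_one_iff_half_add_inv_mem_Icc {z : ℂ} (hz : z ≠ 0) :
    ‖z‖ = 1 ↔ ((z + z⁻¹) / 2).im = 0 ∧ -1 ≤ ((z + z⁻¹) / 2).re ∧ ((z + z⁻¹) / 2).re ≤ 1 := by
  have hs : 0 < normSq z := normSq_pos.2 hz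
  rw [norm_def, Real.sqrt_eq_one]
  simp only [div_ofNat_re, div_ofNat_im, add_re, add_im, inv_re, inv_im]
  constructor
  · intro h
    have hnorm : z.re * z.re + z.im * z.im = 1 := normSq_apply z ▸ h
    rw [h]
    refine ⟨by ring, ?_, ?_⟩ <;> nlinarith [sq_nonneg z.im]
  · rintro ⟨him, hre₁, hre₂⟩
    field_simp at him hre₁ hre₂
    rw [normSq_apply] at hs him hre₁ hre₂ ⊢
    rcases mul_eq_zero.1 (him.trans (mul_zero _)) with hb | hnorm
    · rw [hb] at hre₁ hre₂ hs ⊢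
      rcases lt_or_gt_of_ne (show z.re ≠ 0 by nlinarith) with ha | ha
      · have : (z.re + 1) ^ 2 = 0 := le_antisymm (by nlinarith) (sq_nonneg _)
        linear_combination this - 2 * (pow_eq_zero_iff two_ne_zero).1 this
      · have : (z.re - 1) ^ 2 = 0 := le_antisymm (by nlinarith) (sq_nonneg _)
        linear_combination this + 2 * (pow_eq_zero_iff two_ne_zero).1 this
    · linear_combination hnorm

theorem Matrix.forall_isRoot_charpoly_norm_eq_one_iff {m : Type*} [Fintype m] [DecidableEq m]
    {Y : Matrix m m ℂ} (hY : IsUnit Y.det) :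
    (∀ z, Y.charpoly.IsRoot z → ‖z‖ = 1) ↔
      ∀ μ, ((2⁻¹ : ℂ) • (Y + Y⁻¹)).charpoly.IsRoot μ → μ.im = 0 ∧ -1 ≤ μ.re ∧ μ.re ≤ 1 := by
  simp only [isRoot_charpoly_half_add_inv_iff_exists two_ne_zero hY]
  constructor
  · rintro h μ ⟨z, hroot, rfl⟩
    exact (Complex.norm_eq_one_iff_half_add_inv_mem_Icc
      (ne_zero_of_isRoot_charpoly hY hroot)).1 (h z hroot)
  · intro h z hroot
    exact (Complex.norm_eq_one_iff_half_add_inv_mem_Icc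
      (ne_zero_of_isRoot_charpoly hY hroot)).2 (h _ ⟨z, hroot, rfl⟩)

theorem stdSymplecticJ_eq_neg_J (n : ℕ) : stdSymplecticJ n = -J (Fin n) ℝ := by
  simp [stdSymplecticJ, J, fromBlocks_neg]

theorem mem_symplecticGroup_of_transpose_mul_stdSymplecticJ_mul {n : ℕ}
    {X : Matrix (Fin n ⊕ Fin n) (Fin n ⊕ Fin n) ℝ}
    (hX : Xᵀ * stdSymplecticJ n * X = stdSymplecticJ n) : X ∈ symplecticGroup (Fin n) ℝ := by
  rw [SymplecticGroup.mem_iff']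
  simpa [stdSymplecticJ_eq_neg_J] using hX

/-- Roberts' lemma: for a real symplectic matrix `X`, all complex eigenvalues of `X`
lie on the unit circle iff all eigenvalues of `W = (X + X⁻¹)/2` are real and in `[-1, 1]`. -/
theorem eigenvalues_on_unit_circle_iff_of_symplectic (n : ℕ)
    (X : Matrix (Fin n ⊕ Fin n) (Fin n ⊕ Fin n) ℝ)
    (hX : Xᵀ * stdSymplecticJ n * X = stdSymplecticJ n) :
    (∀ μ : ℂ, ((X.map (algebraMap ℝ ℂ)).charpoly).IsRoot μ → ‖μ‖ = 1) ↔
      (∀ μ : ℂ, ((((1 : ℝ) / 2) • (X + X⁻¹)).map (algebraMap ℝ ℂ)).charpoly.IsRoot μ →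
        μ.im = 0 ∧ -1 ≤ μ.re ∧ μ.re ≤ 1) := by
  have hsymp := mem_symplecticGroup_of_transpose_mul_stdSymplecticJ_mul hX
  have hdet : IsUnit X.det := SymplecticGroup.symplectic_det hsymp
  have hdetC : IsUnit (X.map (algebraMap ℝ ℂ)).det :=
    SymplecticGroup.symplectic_det (SymplecticGroup.map_mem hsymp _)
  have hW : (((1 : ℝ) / 2) • (X + X⁻¹)).map (algebraMap ℝ ℂ) =
      (2⁻¹ : ℂ) • (X.map (algebraMap ℝ ℂ) + (X.map (algebraMap ℝ ℂ))⁻¹) := by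
    rw [← map_nonsing_inv _ hdet]
    ext i j
    simp [mul_add]
  rw [hW]
  exact forall_isRoot_charpoly_norm_eq_one_iff hdetC
end

section
/- Let θ ∈ (0, 2π) with θ ∉ {π/2, π, 3π/2}, let m_1 = m_3 > 0 and m_2 = m_4 > 0, and let v_1, v_2, v_3, v_4 ∈ ℝ², written v_i = (v_{i1}, v_{i2}), satisfy Σ_{i=1}^4 m_i v_i = 0 together with: (i) −v_{21}cos θ + v_{22}sin θ + v_{41}cos θ − v_{42}sin θ = 0; (ii) m_2(v_{21}sin θ + v_{22}cos θ) − (m_2 + m_4)(v_{31}sin θ + v_{32}cos θ) + m_4(v_{41}sin θ + v_{42}cos θ) = 0; (iii) −(v_{11}sin θ + v_{12}cos θ) + (v_{31}sin θ + v_{32}cos θ) = 0. Then v_1 = (v_{11}, −v_{12})R(2θ), v_3 = (v_{31}, −v_{32})R(2θ), v_2 = (v_{41}, −v_{42})R(2θ), and v_4 = (v_{21}, −v_{22})R(2θ). -/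
/-!
The map `v ↦ (v.1, -v.2) R(2θ)` is the reflection in the line spanned by `t = (cos θ, -sin θ)`:
it fixes the component of `v` along `t` and negates the component along the unit normal
`n = (sin θ, cos θ)`. Projecting the momentum condition onto `n` and combining it with (ii) and
(iii) shows that `v₁` and `v₃` have no normal component and that `v₂`, `v₄` have opposite normal
components, while (i) says that `v₂` and `v₄` have the same tangential component.
-/

open Real

/-- A row vector of the plane multiplied on the right by the rotation matrix
`R(φ) = [[cos φ, -sin φ], [sin φ, cos φ]]`. -/
noncomputable def rmulRot (v : ℝ × ℝ) (φ : ℝ) : ℝ × ℝ :=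
  (v.1 * Real.cos φ + v.2 * Real.sin φ, -v.1 * Real.sin φ + v.2 * Real.cos φ)

noncomputable def tangentComp (θ : ℝ) (v : ℝ × ℝ) : ℝ := v.1 * cos θ - v.2 * sin θ

noncomputable def normalComp (θ : ℝ) (v : ℝ × ℝ) : ℝ := v.1 * sin θ + v.2 * cos θ

theorem eq_of_tangentComp_eq_of_normalComp_eq {θ : ℝ} {v w : ℝ × ℝ}
    (ht : tangentComp θ v = tangentComp θ w) (hn : normalComp θ v = normalComp θ w) : v = w := by
  unfold tangentComp at ht
  unfold normalComp at hn
  have hp := sin_sq_add_cos_sq θ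
  ext
  · linear_combination cos θ * ht + sin θ * hn + (w.1 - v.1) * hp
  · linear_combination -sin θ * ht + cos θ * hn + (w.2 - v.2) * hp

theorem tangentComp_rmulRot_two_mul (θ : ℝ) (v : ℝ × ℝ) :
    tangentComp θ (rmulRot (v.1, -v.2) (2 * θ)) = tangentComp θ v := by
  simp only [tangentComp, rmulRot, sin_two_mul, cos_two_mul]
  linear_combination 2 * v.1 * cos θ * sin_sq_add_cos_sq θ

theorem normalComp_rmulRot_two_mul (θ : ℝ) (v : ℝ × ℝ) :
    normalComp θ (rmulRot (v.1, -v.2) (2 * θ)) = -normalComp θ v := by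
  simp only [normalComp, rmulRot, sin_two_mul, cos_two_mul]
  linear_combination -2 * v.2 * cos θ * sin_sq_add_cos_sq θ

theorem eq_rmulRot_two_mul_of_tangentComp_of_normalComp {θ : ℝ} {v w : ℝ × ℝ}
    (ht : tangentComp θ w = tangentComp θ v) (hn : normalComp θ w = -normalComp θ v) :
    w = rmulRot (v.1, -v.2) (2 * θ) :=
  eq_of_tangentComp_eq_of_normalComp_eq (by rw [ht, tangentComp_rmulRot_two_mul])
    (by rw [hn, normalComp_rmulRot_two_mul])

theorem eq_rmulRot_two_mul_self_of_normalComp_eq_zero {θ : ℝ} {v : ℝ × ℝ}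
    (hn : normalComp θ v = 0) : v = rmulRot (v.1, -v.2) (2 * θ) :=
  eq_rmulRot_two_mul_of_tangentComp_of_normalComp rfl (by rw [hn, neg_zero])

/-- `a, b, c, d` stand for the normal components of `v₁, …, v₄`, and `m`, `M` for the two masses. -/
theorem normal_components_of_boundary_conditions {m M a b c d : ℝ} (hm : 0 < m) (hM : 0 < M)
    (hmom : m * a + M * b + m * c + M * d = 0) (h28 : M * b - (M + M) * c + M * d = 0)
    (h29 : -a + c = 0) : a = 0 ∧ c = 0 ∧ b + d = 0 := by
  have hc : 2 * (m + M) * c = 0 := by linear_combination hmom - h28 + m * h29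
  have hc : c = 0 := (mul_eq_zero.mp hc).resolve_left (by positivity)
  have hbd : M * (b + d) = 0 := by linear_combination h28 + (2 * M) * hc
  exact ⟨by linarith, hc, (mul_eq_zero.mp hbd).resolve_left hM.ne'⟩

theorem boundary_velocity_relations_at_0_general (θ : ℝ)
    (m₁ m₂ m₃ m₄ : ℝ)
    (h13 : m₁ = m₃) (h24 : m₂ = m₄) (hm₁ : 0 < m₁) (hm₂ : 0 < m₂)
    (v₁ v₂ v₃ v₄ : ℝ × ℝ)
    (hmom₁ : m₁ * v₁.1 + m₂ * v₂.1 + m₃ * v₃.1 + m₄ * v₄.1 = 0)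
    (hmom₂ : m₁ * v₁.2 + m₂ * v₂.2 + m₃ * v₃.2 + m₄ * v₄.2 = 0)
    (h27 : -v₂.1 * Real.cos θ + v₂.2 * Real.sin θ + v₄.1 * Real.cos θ - v₄.2 * Real.sin θ = 0)
    (h28 : m₂ * (v₂.1 * Real.sin θ + v₂.2 * Real.cos θ)
        - (m₂ + m₄) * (v₃.1 * Real.sin θ + v₃.2 * Real.cos θ)
        + m₄ * (v₄.1 * Real.sin θ + v₄.2 * Real.cos θ) = 0)
    (h29 : -(v₁.1 * Real.sin θ + v₁.2 * Real.cos θ)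
        + (v₃.1 * Real.sin θ + v₃.2 * Real.cos θ) = 0) :
    v₁ = rmulRot (v₁.1, -v₁.2) (2 * θ) ∧
      v₃ = rmulRot (v₃.1, -v₃.2) (2 * θ) ∧
      v₂ = rmulRot (v₄.1, -v₄.2) (2 * θ) ∧
      v₄ = rmulRot (v₂.1, -v₂.2) (2 * θ) := by
  subst h13 h24
  have hmom : m₁ * normalComp θ v₁ + m₂ * normalComp θ v₂ + m₁ * normalComp θ v₃
      + m₂ * normalComp θ v₄ = 0 := by
    unfold normalComp
    linear_combination sin θ * hmom₁ + cos θ * hmom₂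
  obtain ⟨hn₁, hn₃, hn₂₄⟩ := normal_components_of_boundary_conditions hm₁ hm₂ hmom h28 h29
  have ht₂₄ : tangentComp θ v₂ = tangentComp θ v₄ := by
    unfold tangentComp
    linear_combination -h27
  exact ⟨eq_rmulRot_two_mul_self_of_normalComp_eq_zero hn₁,
    eq_rmulRot_two_mul_self_of_normalComp_eq_zero hn₃,
    eq_rmulRot_two_mul_of_tangentComp_of_normalComp ht₂₄ (by linarith),
    eq_rmulRot_two_mul_of_tangentComp_of_normalComp ht₂₄.symm (by linarith)⟩

/-- The algebraic content of the natural boundary conditions at `t = 0`: for velocities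
`v₁, …, v₄ ∈ ℝ²` with vanishing total linear momentum satisfying the first-variation
relations (27)–(29), the velocity-matching relations (25) hold. -/
theorem boundary_velocity_relations_at_0 (θ : ℝ)
    (hθ : θ ∈ Set.Ioo 0 (2 * π)) (hθ1 : θ ≠ π / 2) (hθ2 : θ ≠ π) (hθ3 : θ ≠ 3 * π / 2)
    (m₁ m₂ m₃ m₄ : ℝ)
    (h13 : m₁ = m₃) (h24 : m₂ = m₄) (hm₁ : 0 < m₁) (hm₂ : 0 < m₂)
    (v₁ v₂ v₃ v₄ : ℝ × ℝ)
    (hmom₁ : m₁ * v₁.1 + m₂ * v₂.1 + m₃ * v₃.1 + m₄ * v₄.1 = 0)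
    (hmom₂ : m₁ * v₁.2 + m₂ * v₂.2 + m₃ * v₃.2 + m₄ * v₄.2 = 0)
    (h27 : -v₂.1 * Real.cos θ + v₂.2 * Real.sin θ + v₄.1 * Real.cos θ - v₄.2 * Real.sin θ = 0)
    (h28 : m₂ * (v₂.1 * Real.sin θ + v₂.2 * Real.cos θ)
        - (m₂ + m₄) * (v₃.1 * Real.sin θ + v₃.2 * Real.cos θ)
        + m₄ * (v₄.1 * Real.sin θ + v₄.2 * Real.cos θ) = 0)
    (h29 : -(v₁.1 * Real.sin θ + v₁.2 * Real.cos θ)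
        + (v₃.1 * Real.sin θ + v₃.2 * Real.cos θ) = 0) :
    v₁ = rmulRot (v₁.1, -v₁.2) (2 * θ) ∧
      v₃ = rmulRot (v₃.1, -v₃.2) (2 * θ) ∧
      v₂ = rmulRot (v₄.1, -v₄.2) (2 * θ) ∧
      v₄ = rmulRot (v₂.1, -v₂.2) (2 * θ) :=
  boundary_velocity_relations_at_0_general θ m₁ m₂ m₃ m₄ h13 h24 hm₁ hm₂ v₁ v₂ v₃ v₄ hmom₁ hmom₂ h27
    h28 h29
end

section
/- Fix θ ∈ (0, 2π) with θ ∉ {π/2, π, 3π/2}, masses with m_1 = m_3 > 0 and m_2 = m_4 > 0, and T > 0. Then Σ_{i=1}^4 (1/2) m_i ‖Qend_i(a) − Qstart_i(a)‖² → +∞ as ‖a‖ → ∞ over a ∈ ℝ⁶. Consequently, defining Ã(a) as the infimum of the action A(q) over all C¹ paths q : [0, T] → (ℝ²)^4 with q(0) = Qstart(a) and q(T) = Qend(a), one has Ã(a) → +∞ as ‖a‖ → ∞. -/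
/-!
Both limits come from the kinetic energy alone. Each body has positive mass and the map
`a ↦ Qend(a) - Qstart(a)` is linear and, when `sin θ cos θ ≠ 0`, injective, so
`a ↦ Σ ½ mᵢ ‖Qendᵢ(a) - Qstartᵢ(a)‖²` is a positive definite quadratic form; by compactness of
the unit sphere it is at least `c ‖a‖²` for some `c > 0`. For the action, the potential term is
nonnegative and Cauchy–Schwarz gives `‖q(T) - q(0)‖² ≤ T ∫₀ᵀ ‖q̇‖²` for each body, so every
admissible path has action at least `1 / T` times that quadratic form.
-/

open Real MeasureTheory Filter
open scoped ENNReal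

noncomputable section

def pt (x y : ℝ) : EuclideanSpace ℝ (Fin 2) :=
  (WithLp.equiv 2 (Fin 2 → ℝ)).symm ![x, y]

/-- A row vector of the plane multiplied on the right by the rotation matrix `R(φ)`. -/
def rot (v : EuclideanSpace ℝ (Fin 2)) (φ : ℝ) : EuclideanSpace ℝ (Fin 2) :=
  pt (v 0 * Real.cos φ + v 1 * Real.sin φ) (-v 0 * Real.sin φ + v 1 * Real.cos φ)

def Qstart (θ m₁ m₂ m₃ m₄ : ℝ) (a : EuclideanSpace ℝ (Fin 6)) :
    Fin 4 → EuclideanSpace ℝ (Fin 2) :=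
  ![rot (pt 0 (-a 2)) θ,
    rot (pt (-a 0) (a 1)) θ,
    rot (pt 0 ((-(m₂ + m₄) * a 1 + m₁ * a 2) / m₃)) θ,
    rot (pt (a 0) (a 1)) θ]

def Qend (m₁ m₂ m₃ m₄ : ℝ) (a : EuclideanSpace ℝ (Fin 6)) :
    Fin 4 → EuclideanSpace ℝ (Fin 2) :=
  ![pt (a 3) (a 4),
    pt 0 (-a 5),
    pt (-a 3) (a 4),
    pt 0 ((-(m₁ + m₃) * a 4 + m₂ * a 5) / m₄)]

/-- The action of a path on `[0, T]`; valued in `ℝ≥0∞`, so a divergent integral gives `∞`. -/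
def action (m : Fin 4 → ℝ) (T : ℝ) (q : Fin 4 → ℝ → EuclideanSpace ℝ (Fin 2)) : ℝ≥0∞ :=
  ∫⁻ t in Set.Icc (0 : ℝ) T,
    ENNReal.ofReal ((1 / 2) * ∑ i, m i * ‖deriv (q i) t‖ ^ 2 +
      ∑ i, ∑ j ∈ Finset.Ioi i, m i * m j / ‖q i t - q j t‖)

/-- `Ã(a)`: the infimum of the action over all `C¹` paths joining `Qstart(a)` to `Qend(a)`. -/
def Atilde (θ m₁ m₂ m₃ m₄ T : ℝ) (a : EuclideanSpace ℝ (Fin 6)) : ℝ≥0∞ :=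
  ⨅ q ∈ {q : Fin 4 → ℝ → EuclideanSpace ℝ (Fin 2) |
      (∀ i, ContDiff ℝ 1 (q i)) ∧ (∀ i, q i 0 = Qstart θ m₁ m₂ m₃ m₄ a i) ∧
        (∀ i, q i T = Qend m₁ m₂ m₃ m₄ a i)},
    action ![m₁, m₂, m₃, m₄] T q

theorem exists_pos_mul_norm_sq_le_of_homogeneous {E : Type*} [NormedAddCommGroup E]
    [NormedSpace ℝ E] [FiniteDimensional ℝ E] [Nontrivial E] {f : E → ℝ} (hf : Continuous f)
    (hhom : ∀ (r : ℝ) x, f (r • x) = r ^ 2 * f x) (hpos : ∀ x ≠ 0, 0 < f x) :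
    ∃ c > 0, ∀ x, c * ‖x‖ ^ 2 ≤ f x := by
  obtain ⟨x₀, hx₀, hmin⟩ := (isCompact_sphere (0 : E) 1).exists_isMinOn
    (NormedSpace.sphere_nonempty.2 zero_le_one) hf.continuousOn
  have hx₀ : x₀ ≠ 0 := ne_zero_of_mem_unit_sphere ⟨x₀, hx₀⟩
  refine ⟨f x₀, hpos x₀ hx₀, fun x => ?_⟩
  rcases eq_or_ne x 0 with rfl | hx
  · simpa using (hhom 0 0).ge
  have hr : 0 < ‖x‖ := norm_pos_iff.2 hx
  have hunit : ‖x‖⁻¹ • x ∈ Metric.sphere (0 : E) 1 := by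
    simp [norm_smul, hr.ne']
  calc f x₀ * ‖x‖ ^ 2 ≤ f (‖x‖⁻¹ • x) * ‖x‖ ^ 2 := by gcongr; exact hmin hunit
    _ = f x := by rw [hhom]; field_simp

theorem tendsto_comap_norm_atTop_of_homogeneous {E : Type*} [NormedAddCommGroup E]
    [NormedSpace ℝ E] [FiniteDimensional ℝ E] [Nontrivial E] {f : E → ℝ} (hf : Continuous f)
    (hhom : ∀ (r : ℝ) x, f (r • x) = r ^ 2 * f x) (hpos : ∀ x ≠ 0, 0 < f x) :
    Tendsto f (comap (fun x => ‖x‖) atTop) atTop := by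
  obtain ⟨c, hc, hle⟩ := exists_pos_mul_norm_sq_le_of_homogeneous hf hhom hpos
  exact tendsto_atTop_mono hle
    (((tendsto_pow_atTop two_ne_zero).const_mul_atTop hc).comp tendsto_comap)

theorem sq_intervalIntegral_le_mul_intervalIntegral_sq {v : ℝ → ℝ} (hv : Continuous v) {a b : ℝ}
    (hab : a ≤ b) :
    (∫ t in a..b, v t) ^ 2 ≤ (b - a) * ∫ t in a..b, v t ^ 2 := by
  rcases hab.eq_or_lt with rfl | hlt
  · simp
  generalize hI : (∫ t in a..b, v t) = I
  have hint : ∀ {g : ℝ → ℝ}, Continuous g → IntervalIntegrable g volume a b :=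
    fun hg => hg.intervalIntegrable a b
  have hexpand : ∫ t in a..b, ((b - a) * v t - I) ^ 2
      = (b - a) * ((b - a) * (∫ t in a..b, v t ^ 2) - I ^ 2) := by
    have hsq : (fun t => ((b - a) * v t - I) ^ 2)
        = fun t => (b - a) ^ 2 * v t ^ 2 - (2 * (b - a) * I) * v t + I ^ 2 := by
      ext t; ring
    rw [hsq, intervalIntegral.integral_add (hint (by fun_prop)) (hint (by fun_prop)),
      intervalIntegral.integral_sub (hint (by fun_prop)) (hint (by fun_prop)),
      intervalIntegral.integral_const_mul, intervalIntegral.integral_const_mul, hI,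
      intervalIntegral.integral_const, smul_eq_mul]
    ring
  have hnonneg : 0 ≤ ∫ t in a..b, ((b - a) * v t - I) ^ 2 :=
    intervalIntegral.integral_nonneg hab fun t _ => sq_nonneg _
  rw [hexpand] at hnonneg
  linarith [nonneg_of_mul_nonneg_right hnonneg (sub_pos.2 hlt)]

theorem norm_sub_sq_le_mul_integral_norm_deriv_sq {E : Type*} [NormedAddCommGroup E]
    [NormedSpace ℝ E] [CompleteSpace E] {γ : ℝ → E} (hγ : ContDiff ℝ 1 γ) {a b : ℝ}
    (hab : a ≤ b) : ‖γ b - γ a‖ ^ 2 ≤ (b - a) * ∫ t in a..b, ‖deriv γ t‖ ^ 2 := by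
  have hγ' : Continuous (deriv γ) := hγ.continuous_deriv le_rfl
  have hftc : ∫ t in a..b, deriv γ t = γ b - γ a :=
    intervalIntegral.integral_deriv_eq_sub
      (fun x _ => (hγ.differentiable one_ne_zero).differentiableAt) (hγ'.intervalIntegrable a b)
  calc ‖γ b - γ a‖ ^ 2 ≤ (∫ t in a..b, ‖deriv γ t‖) ^ 2 := by
        rw [← hftc]; gcongr; exact intervalIntegral.norm_integral_le_integral_norm hab
    _ ≤ _ := sq_intervalIntegral_le_mul_intervalIntegral_sq hγ'.norm hab

section KineticEnergy

variable {ι E : Type*} [Fintype ι] [NormedAddCommGroup E]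

def kineticEnergy (m : ι → ℝ) (v : ι → E) : ℝ := (1 / 2) * ∑ i, m i * ‖v i‖ ^ 2

lemma kineticEnergy_smul [NormedSpace ℝ E] (m : ι → ℝ) (r : ℝ) (v : ι → E) :
    kineticEnergy m (r • v) = r ^ 2 * kineticEnergy m v := by
  have hterm : ∀ i, m i * ‖(r • v) i‖ ^ 2 = r ^ 2 * (m i * ‖v i‖ ^ 2) := fun i => by
    rw [Pi.smul_apply, norm_smul, Real.norm_eq_abs, mul_pow, sq_abs]; ring
  simp only [kineticEnergy, hterm, ← Finset.mul_sum]
  ring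

lemma continuous_kineticEnergy (m : ι → ℝ) : Continuous (kineticEnergy (E := E) m) := by
  unfold kineticEnergy; fun_prop

lemma kineticEnergy_nonneg {m : ι → ℝ} (hm : ∀ i, 0 ≤ m i) (v : ι → E) :
    0 ≤ kineticEnergy m v :=
  mul_nonneg (by norm_num) (Finset.sum_nonneg fun i _ => mul_nonneg (hm i) (sq_nonneg _))

lemma kineticEnergy_pos {m : ι → ℝ} (hm : ∀ i, 0 < m i) {v : ι → E} (hv : v ≠ 0) :
    0 < kineticEnergy m v := by
  obtain ⟨i, hi⟩ := Function.ne_iff.1 hv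
  refine mul_pos (by norm_num) (Finset.sum_pos' (fun j _ => ?_) ⟨i, Finset.mem_univ _, ?_⟩)
  · exact mul_nonneg (hm j).le (sq_nonneg _)
  · exact mul_pos (hm i) (pow_pos (norm_pos_iff.2 hi) 2)

lemma kineticEnergy_sub_div_le_integral [NormedSpace ℝ E] [CompleteSpace E] {m : ι → ℝ}
    (hm : ∀ i, 0 ≤ m i) {q : ι → ℝ → E} (hq : ∀ i, ContDiff ℝ 1 (q i)) {a b : ℝ} (hab : a < b) :
    kineticEnergy m (fun i => q i b - q i a) / (b - a)
      ≤ ∫ t in a..b, kineticEnergy m (fun i => deriv (q i) t) := by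
  have hcont : ∀ i, Continuous fun t => ‖deriv (q i) t‖ ^ 2 :=
    fun i => ((hq i).continuous_deriv le_rfl).norm.pow 2
  simp only [kineticEnergy]
  rw [intervalIntegral.integral_const_mul, intervalIntegral.integral_finsetSum
    fun i _ => ((hcont i).intervalIntegrable a b).const_mul (m i), mul_div_assoc, Finset.sum_div]
  gcongr with i
  rw [intervalIntegral.integral_const_mul, mul_div_assoc]
  gcongr
  · exact hm i
  · rw [div_le_iff₀' (sub_pos.2 hab)]
    exact norm_sub_sq_le_mul_integral_norm_deriv_sq (hq i) hab.le

end KineticEnergy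

@[simp] lemma pt_apply_zero (x y : ℝ) : pt x y 0 = x := rfl
@[simp] lemma pt_apply_one (x y : ℝ) : pt x y 1 = y := rfl

lemma pt_inj {x y x' y' : ℝ} : pt x y = pt x' y' ↔ x = x' ∧ y = y' := by
  refine ⟨fun h => ⟨by simpa using congrArg (· 0) h, by simpa using congrArg (· 1) h⟩, ?_⟩
  rintro ⟨rfl, rfl⟩; rfl

lemma smul_pt (r x y : ℝ) : r • pt x y = pt (r * x) (r * y) := by
  ext j; fin_cases j <;> rfl

lemma continuous_pt {X : Type*} [TopologicalSpace X] {f g : X → ℝ} (hf : Continuous f)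
    (hg : Continuous g) : Continuous fun x => pt (f x) (g x) :=
  (PiLp.continuous_toLp 2 _).comp (by fun_prop)

lemma rot_pt (x y φ : ℝ) :
    rot (pt x y) φ = pt (x * cos φ + y * sin φ) (-x * sin φ + y * cos φ) := rfl

lemma Qstart_smul (θ m₁ m₂ m₃ m₄ r : ℝ) (a : EuclideanSpace ℝ (Fin 6)) :
    Qstart θ m₁ m₂ m₃ m₄ (r • a) = r • Qstart θ m₁ m₂ m₃ m₄ a := by
  funext i
  fin_cases i <;> simp [Qstart, rot_pt, smul_pt, pt_inj] <;> constructor <;> ring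

lemma Qend_smul (m₁ m₂ m₃ m₄ r : ℝ) (a : EuclideanSpace ℝ (Fin 6)) :
    Qend m₁ m₂ m₃ m₄ (r • a) = r • Qend m₁ m₂ m₃ m₄ a := by
  funext i
  fin_cases i <;> simp [Qend, smul_pt, pt_inj]; ring

lemma continuous_Qstart (θ m₁ m₂ m₃ m₄ : ℝ) : Continuous (Qstart θ m₁ m₂ m₃ m₄) := by
  refine continuous_pi fun i => ?_
  fin_cases i <;> simp only [Qstart, rot_pt] <;> apply continuous_pt <;> fun_prop

lemma continuous_Qend (m₁ m₂ m₃ m₄ : ℝ) : Continuous (Qend m₁ m₂ m₃ m₄) := by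
  refine continuous_pi fun i => ?_
  fin_cases i <;> simp only [Qend] <;> apply continuous_pt <;> fun_prop

lemma eq_zero_of_Qstart_eq_Qend {θ m₁ m₂ m₃ m₄ : ℝ} {a : EuclideanSpace ℝ (Fin 6)}
    (hs : sin θ ≠ 0) (hc : cos θ ≠ 0) (hm₁ : 0 < m₁) (hm₃ : 0 < m₃)
    (h : Qstart θ m₁ m₂ m₃ m₄ a = Qend m₁ m₂ m₃ m₄ a) : a = 0 := by
  have h0 := congrFun h 0
  have h1 := congrFun h 1
  have h2 := congrFun h 2
  have h3 := congrFun h 3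
  simp only [Qstart, Qend, rot_pt, pt_inj, Fin.isValue, Matrix.cons_val_zero, Matrix.cons_val_one,
    Matrix.cons_val, zero_mul, neg_mul, zero_add, neg_zero, neg_neg, neg_add_rev] at h0 h1 h2 h3
  obtain ⟨h03, h04⟩ := h0
  obtain ⟨h1c, h15⟩ := h1
  obtain ⟨-, h24⟩ := h2
  obtain ⟨h3c, -⟩ := h3
  -- bodies 2 and 4 give `a₁ sin θ = a₀ cos θ = 0`, then bodies 1 and 3 give `(m₁ + m₃) a₂ = 0`
  have ha₁ : a 1 = 0 := (mul_eq_zero.1 (by linarith : a 1 * sin θ = 0)).resolve_right hs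
  have ha₀ : a 0 = 0 := (mul_eq_zero.1 (by linarith : a 0 * cos θ = 0)).resolve_right hc
  have ha₅ : a 5 = 0 := by rw [ha₀, ha₁] at h15; linarith
  have ha₂ : a 2 = 0 := by
    rw [ha₁, ← h04] at h24
    field_simp at h24
    have : a 2 * (m₁ + m₃) = 0 := by linear_combination h24
    simpa [(by positivity : m₁ + m₃ ≠ 0)] using this
  have ha₃ : a 3 = 0 := by rw [ha₂] at h03; linarith
  have ha₄ : a 4 = 0 := by rw [ha₂] at h04; linarith
  ext j
  fin_cases j <;> assumption

lemma sin_two_mul_ne_zero {θ : ℝ} (hθ : θ ∈ Set.Ioo 0 (2 * π)) (hθ1 : θ ≠ π / 2) (hθ2 : θ ≠ π)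
    (hθ3 : θ ≠ 3 * π / 2) : sin (2 * θ) ≠ 0 := by
  rw [sin_ne_zero_iff]
  intro n hn
  have h0 : (0 : ℝ) < n := by nlinarith [pi_pos, hθ.1]
  have h4 : (n : ℝ) < 4 := by nlinarith [pi_pos, hθ.2]
  obtain ⟨h0, h4⟩ : 0 < n ∧ n < 4 := ⟨by exact_mod_cast h0, by exact_mod_cast h4⟩
  interval_cases n
  · exact hθ1 (by push_cast at hn; linarith)
  · exact hθ2 (by push_cast at hn; linarith)
  · exact hθ3 (by push_cast at hn; linarith)

lemma ofReal_kineticEnergy_div_le_action {m : Fin 4 → ℝ} (hm : ∀ i, 0 ≤ m i) {T : ℝ} (hT : 0 < T)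
    {q : Fin 4 → ℝ → EuclideanSpace ℝ (Fin 2)} (hq : ∀ i, ContDiff ℝ 1 (q i)) :
    ENNReal.ofReal (kineticEnergy m (fun i => q i T - q i 0) / T) ≤ action m T q := by
  have hK : Continuous fun t => kineticEnergy m fun i => deriv (q i) t :=
    (continuous_kineticEnergy m).comp (continuous_pi fun i => (hq i).continuous_deriv le_rfl)
  calc ENNReal.ofReal (kineticEnergy m (fun i => q i T - q i 0) / T)
      ≤ ENNReal.ofReal (∫ t in Set.Icc 0 T, kineticEnergy m fun i => deriv (q i) t) := by
        gcongr
        rw [integral_Icc_eq_integral_Ioc, ← intervalIntegral.integral_of_le hT.le]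
        simpa using kineticEnergy_sub_div_le_integral hm hq hT
    _ = ∫⁻ t in Set.Icc 0 T, ENNReal.ofReal (kineticEnergy m fun i => deriv (q i) t) :=
        ofReal_integral_eq_lintegral_ofReal hK.integrableOn_Icc
          (ae_of_all _ fun t => kineticEnergy_nonneg hm _)
    _ ≤ action m T q := by
        refine lintegral_mono fun t => ENNReal.ofReal_le_ofReal (le_add_of_nonneg_right ?_)
        exact Finset.sum_nonneg fun i _ => Finset.sum_nonneg fun j _ =>
          div_nonneg (mul_nonneg (hm i) (hm j)) (norm_nonneg _)

lemma ofReal_kineticEnergy_div_le_Atilde {θ m₁ m₂ m₃ m₄ T : ℝ}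
    (hm : ∀ i, 0 ≤ ![m₁, m₂, m₃, m₄] i) (hT : 0 < T) (a : EuclideanSpace ℝ (Fin 6)) :
    ENNReal.ofReal (kineticEnergy ![m₁, m₂, m₃, m₄]
        (Qend m₁ m₂ m₃ m₄ a - Qstart θ m₁ m₂ m₃ m₄ a) / T) ≤ Atilde θ m₁ m₂ m₃ m₄ T a :=
  le_iInf₂ fun q ⟨hq, h0, hT'⟩ => by
    have hq' := ofReal_kineticEnergy_div_le_action hm hT hq
    simp only [h0, hT'] at hq'
    exact hq'

/-- Coercivity of the SPBC action: the kinetic lower bound and hence `Ã(a)` tend to `∞`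
as `‖a‖ → ∞`. -/
theorem Atilde_tendsto_top (θ : ℝ) (hθ : θ ∈ Set.Ioo 0 (2 * π))
    (hθ1 : θ ≠ π / 2) (hθ2 : θ ≠ π) (hθ3 : θ ≠ 3 * π / 2)
    (m₁ m₂ m₃ m₄ : ℝ) (h13 : m₁ = m₃) (h24 : m₂ = m₄) (hm₁ : 0 < m₁) (hm₂ : 0 < m₂)
    (T : ℝ) (hT : 0 < T) :
    Tendsto (fun a : EuclideanSpace ℝ (Fin 6) =>
        ∑ i, (1 / 2) * ![m₁, m₂, m₃, m₄] i *
          ‖Qend m₁ m₂ m₃ m₄ a i - Qstart θ m₁ m₂ m₃ m₄ a i‖ ^ 2)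
      (comap (fun a => ‖a‖) atTop) atTop ∧
    Tendsto (fun a : EuclideanSpace ℝ (Fin 6) => Atilde θ m₁ m₂ m₃ m₄ T a)
      (comap (fun a => ‖a‖) atTop) (nhds ⊤) := by
  have hm : ∀ i, 0 < ![m₁, m₂, m₃, m₄] i := by
    intro i; fin_cases i <;> simp [hm₁, hm₂, ← h13, ← h24]
  obtain ⟨hs, hc⟩ : sin θ ≠ 0 ∧ cos θ ≠ 0 := by
    simpa [sin_two_mul] using sin_two_mul_ne_zero hθ hθ1 hθ2 hθ3
  have hE : Tendsto (fun a => kineticEnergy ![m₁, m₂, m₃, m₄]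
      (Qend m₁ m₂ m₃ m₄ a - Qstart θ m₁ m₂ m₃ m₄ a)) (comap (fun a => ‖a‖) atTop) atTop := by
    refine tendsto_comap_norm_atTop_of_homogeneous ?_ (fun r a => ?_) (fun a ha => ?_)
    · exact (continuous_kineticEnergy _).comp ((continuous_Qend ..).sub (continuous_Qstart ..))
    · rw [Qend_smul, Qstart_smul, ← smul_sub, kineticEnergy_smul]
    · refine kineticEnergy_pos hm (sub_ne_zero.2 fun h => ha ?_)
      exact eq_zero_of_Qstart_eq_Qend hs hc hm₁ (h13 ▸ hm₁) h.symm
  refine ⟨hE.congr fun a => ?_, tendsto_nhds_top_mono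
    (ENNReal.tendsto_ofReal_atTop.comp (hE.atTop_div_const hT))
    (.of_forall (ofReal_kineticEnergy_div_le_Atilde (fun i => (hm i).le) hT))⟩
  simp only [kineticEnergy, Finset.mul_sum, Pi.sub_apply, mul_assoc]

end
end

section
/- For any ω > 0, m_1 > 0 and m_2 > 0, there exists exactly one pair (r_1, r_2) with r_1 > 0 and r_2 > 0 satisfying the rhomboidal central configuration equations ω² = 2m_2/(r_1² + r_2²)^{3/2} + m_1/(4r_1³) and ω² = 2m_1/(r_1² + r_2²)^{3/2} + m_2/(4r_2³). -/
/-!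
Write `r₂ = t r₁`, so that `(r₁² + r₂²)^{3/2} = r₁³ G(t)` with `G(t) = (1 + t²)^{3/2}`
(`hypotCube`), and `G(t) = t³ G(1/t)`. Multiplied by `(r₁² + r₂²)^{3/2}`, the two equations say
`ω² r₁³ G(t) = 2m₂ + m₁ G(t)/4 = 2m₁ + m₂ G(1/t)/4`. The difference of the last two expressions
(`shapeDefect`) depends only on the shape `t`; it is strictly increasing in `t` and changes sign
on `[1/2, 2]`, so it has exactly one positive root, and then the first equation fixes `r₁³`.
-/
open Real Set

lemma sq_rpow_three_halves {x : ℝ} (hx : 0 ≤ x) : (x ^ 2) ^ ((3 : ℝ) / 2) = x ^ 3 := by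
  rw [← rpow_natCast_mul hx]
  norm_num

lemma existsUnique_pos_pow_eq {a : ℝ} (ha : 0 < a) {n : ℕ} (hn : n ≠ 0) :
    ∃! x : ℝ, 0 < x ∧ x ^ n = a :=
  ⟨a ^ (n⁻¹ : ℝ), ⟨by positivity, rpow_inv_natCast_pow ha.le hn⟩,
    fun _ ⟨hx, hxa⟩ => (pow_left_inj₀ hx.le (by positivity) hn).1
      (hxa.trans (rpow_inv_natCast_pow ha.le hn).symm)⟩

noncomputable def hypotCube (t : ℝ) : ℝ := (1 + t ^ 2) ^ ((3 : ℝ) / 2)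

lemma hypotCube_pos (t : ℝ) : 0 < hypotCube t := by
  unfold hypotCube; positivity

lemma continuous_hypotCube : Continuous hypotCube :=
  (continuous_rpow_const (by norm_num)).comp (by fun_prop)

lemma hypotCube_strictMonoOn : StrictMonoOn hypotCube (Ici 0) := by
  intro a ha b _ hab
  have ha : 0 ≤ a := ha
  exact rpow_lt_rpow (by positivity) (by nlinarith) (by norm_num)

lemma sq_add_mul_sq_rpow_three_halves {r : ℝ} (hr : 0 ≤ r) (t : ℝ) :
    (r ^ 2 + (t * r) ^ 2) ^ ((3 : ℝ) / 2) = r ^ 3 * hypotCube t := by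
  rw [show r ^ 2 + (t * r) ^ 2 = r ^ 2 * (1 + t ^ 2) by ring,
    mul_rpow (by positivity) (by positivity), sq_rpow_three_halves hr, hypotCube]

lemma hypotCube_eq_pow_mul_hypotCube_inv {t : ℝ} (ht : 0 < t) :
    hypotCube t = t ^ 3 * hypotCube t⁻¹ := by
  rw [← sq_add_mul_sq_rpow_three_halves ht.le, inv_mul_cancel₀ ht.ne', hypotCube, add_comm,
    one_pow]

lemma eight_lt_hypotCube_two : 8 < hypotCube 2 := by
  calc (8 : ℝ) = (2 ^ 2) ^ ((3 : ℝ) / 2) := by rw [sq_rpow_three_halves] <;> norm_num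
    _ < hypotCube 2 := rpow_lt_rpow (by norm_num) (by norm_num) (by norm_num)

lemma hypotCube_inv_two_lt_eight : hypotCube 2⁻¹ < 8 := by
  calc hypotCube 2⁻¹ < (2 ^ 2) ^ ((3 : ℝ) / 2) :=
        rpow_lt_rpow (by norm_num) (by norm_num) (by norm_num)
    _ = 8 := by rw [sq_rpow_three_halves] <;> norm_num

noncomputable def shapeDefect (m₁ m₂ t : ℝ) : ℝ :=
  2 * m₂ + m₁ / 4 * hypotCube t - (2 * m₁ + m₂ / 4 * hypotCube t⁻¹)

lemma shapeDefect_swap_inv (m₁ m₂ t : ℝ) : shapeDefect m₂ m₁ t⁻¹ = -shapeDefect m₁ m₂ t := by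
  rw [shapeDefect, shapeDefect, inv_inv]; ring

lemma shapeDefect_two_pos {m₁ m₂ : ℝ} (hm₁ : 0 < m₁) (hm₂ : 0 ≤ m₂) :
    0 < shapeDefect m₁ m₂ 2 := by
  have h₁ := mul_lt_mul_of_pos_left eight_lt_hypotCube_two hm₁
  have h₂ := mul_le_mul_of_nonneg_left hypotCube_inv_two_lt_eight.le hm₂
  rw [shapeDefect]
  linarith

lemma shapeDefect_strictMonoOn {m₁ m₂ : ℝ} (hm₁ : 0 < m₁) (hm₂ : 0 ≤ m₂) :
    StrictMonoOn (shapeDefect m₁ m₂) (Ioi 0) := by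
  intro a ha b _ hab
  have ha : 0 < a := ha
  have h₁ := mul_lt_mul_of_pos_left
    (hypotCube_strictMonoOn ha.le (ha.trans hab).le hab) hm₁
  have h₂ := mul_le_mul_of_nonneg_left (hypotCube_strictMonoOn.monotoneOn
    (inv_pos.2 (ha.trans hab)).le (inv_pos.2 ha).le (inv_anti₀ ha hab.le)) hm₂
  rw [shapeDefect, shapeDefect]
  linarith

lemma existsUnique_shapeDefect_eq_zero {m₁ m₂ : ℝ} (hm₁ : 0 < m₁) (hm₂ : 0 < m₂) :
    ∃! t : ℝ, 0 < t ∧ shapeDefect m₁ m₂ t = 0 := by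
  have hcont : ContinuousOn (shapeDefect m₁ m₂) (Icc 2⁻¹ 2) := by
    have hinv : ContinuousOn (·⁻¹) (Icc (2⁻¹ : ℝ) 2) :=
      continuousOn_inv₀.mono fun x hx => (lt_of_lt_of_le (by norm_num) hx.1).ne'
    have := continuous_hypotCube
    unfold shapeDefect
    fun_prop
  have hneg : shapeDefect m₁ m₂ 2⁻¹ < 0 := by
    rw [← neg_pos, ← shapeDefect_swap_inv, inv_inv]; exact shapeDefect_two_pos hm₂ hm₁.le
  obtain ⟨t, ht, hzero⟩ := intermediate_value_Icc (by norm_num) hcont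
    ⟨hneg.le, (shapeDefect_two_pos hm₁ hm₂.le).le⟩
  have ht_pos : 0 < t := lt_of_lt_of_le (by norm_num) ht.1
  exact ⟨t, ⟨ht_pos, hzero⟩, fun s ⟨hs, hs0⟩ =>
    (shapeDefect_strictMonoOn hm₁ hm₂.le).injOn hs ht_pos (hs0.trans hzero.symm)⟩

lemma rhomboidal_eqs_iff {ω m₁ m₂ r t : ℝ} (hr : 0 < r) (ht : 0 < t) :
    (ω ^ 2 = 2 * m₂ / (r ^ 2 + (t * r) ^ 2) ^ ((3 : ℝ) / 2) + m₁ / (4 * r ^ 3) ∧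
      ω ^ 2 = 2 * m₁ / (r ^ 2 + (t * r) ^ 2) ^ ((3 : ℝ) / 2) + m₂ / (4 * (t * r) ^ 3)) ↔
    shapeDefect m₁ m₂ t = 0 ∧ ω ^ 2 * r ^ 3 * hypotCube t = 2 * m₂ + m₁ / 4 * hypotCube t := by
  have hG := hypotCube_pos t
  have hD : r ^ 3 * hypotCube t ≠ 0 := by positivity
  have e₁ : 2 * m₂ / (r ^ 3 * hypotCube t) + m₁ / (4 * r ^ 3) =
      (2 * m₂ + m₁ / 4 * hypotCube t) / (r ^ 3 * hypotCube t) := by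
    field_simp
  have e₂ : 2 * m₁ / (r ^ 3 * hypotCube t) + m₂ / (4 * (t * r) ^ 3) =
      (2 * m₁ + m₂ / 4 * hypotCube t⁻¹) / (r ^ 3 * hypotCube t) := by
    rw [hypotCube_eq_pow_mul_hypotCube_inv ht]
    have := hypotCube_pos t⁻¹
    generalize hypotCube t⁻¹ = g at this ⊢
    field_simp
  rw [sq_add_mul_sq_rpow_three_halves hr.le, e₁, e₂, eq_div_iff hD, eq_div_iff hD, shapeDefect,
    sub_eq_zero, ← mul_assoc]
  constructor
  · rintro ⟨h₁, h₂⟩; exact ⟨h₁.symm.trans h₂, h₁⟩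
  · rintro ⟨h, h₁⟩; exact ⟨h₁, h₁.trans h⟩

/-- For any `ω, m₁, m₂ > 0` there is exactly one pair `(r₁, r₂)` of positive radii
satisfying the rhomboidal central configuration equations. -/
theorem rhomboidal_radii_existence_uniqueness (ω m₁ m₂ : ℝ)
    (hω : 0 < ω) (hm₁ : 0 < m₁) (hm₂ : 0 < m₂) :
    ∃! r : ℝ × ℝ, 0 < r.1 ∧ 0 < r.2 ∧
      ω ^ 2 = 2 * m₂ / (r.1 ^ 2 + r.2 ^ 2) ^ ((3 : ℝ) / 2) + m₁ / (4 * r.1 ^ 3) ∧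
      ω ^ 2 = 2 * m₁ / (r.1 ^ 2 + r.2 ^ 2) ^ ((3 : ℝ) / 2) + m₂ / (4 * r.2 ^ 3) := by
  obtain ⟨t, ⟨ht, hshape⟩, ht_unique⟩ := existsUnique_shapeDefect_eq_zero hm₁ hm₂
  have hG := hypotCube_pos t
  obtain ⟨ρ, ⟨hρ, hρ_cube⟩, hρ_unique⟩ := existsUnique_pos_pow_eq (n := 3)
    (a := (2 * m₂ + m₁ / 4 * hypotCube t) / (ω ^ 2 * hypotCube t)) (by positivity) (by norm_num)
  refine ⟨(ρ, t * ρ), ⟨hρ, mul_pos ht hρ, (rhomboidal_eqs_iff hρ ht).2 ⟨hshape, ?_⟩⟩, ?_⟩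
  · rw [hρ_cube]; field_simp
  rintro ⟨r₁, r₂⟩ ⟨hr₁, hr₂, heqs⟩
  have hr₂_eq : r₂ = r₂ / r₁ * r₁ := (div_mul_cancel₀ r₂ hr₁.ne').symm
  dsimp only at heqs
  rw [hr₂_eq] at heqs
  obtain ⟨hshape', hsize⟩ := (rhomboidal_eqs_iff hr₁ (div_pos hr₂ hr₁)).1 heqs
  obtain rfl := ht_unique _ ⟨div_pos hr₂ hr₁, hshape'⟩
  obtain rfl := hρ_unique r₁ ⟨hr₁, by rw [eq_div_iff (by positivity), ← hsize]; ring⟩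
  exact Prod.ext rfl hr₂_eq
end
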